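/- Let K be a compact subset of ℝ of infinite cardinality, n ≥ 2, and let δ_n(K) = sup over all x_1,…,x_n ∈ K of ∏_{1 ≤ i ≠ j ≤ n} |x_i − x_j|^{1/(n(n−1))}. Then for every monic real polynomial P of degree n, δ_{n+1}(K)^{n(n+1)/2} ≤ (n+1) · δ_n(K)^{n(n−1)/2} · ‖P‖_K. -/

import Mathlib

open Polynomial

/-- The sup norm of a real polynomial on a set `K ⊆ ℝ`. -/
noncomputable def supNormOn (K : Set ℝ) (P : Polynomial ℝ) : ℝ :=
  sSup ((fun x => |P.eval x|) '' K)

/-- The `n`-th diameter `δ_n(K)` of a set `K ⊆ ℝ`. -/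
noncomputable def deltaN (K : Set ℝ) (n : ℕ) : ℝ :=
  sSup {r : ℝ | ∃ x : Fin n → ℝ, (∀ i, x i ∈ K) ∧
    r = (∏ p ∈ Finset.univ.offDiag, |x p.1 - x p.2|) ^ (((n : ℝ) * ((n : ℝ) - 1))⁻¹)}

/-! For `x₀, …, xₙ ∈ K`, the product `∏_{i<j} |xⱼ - xᵢ|` is the absolute value of the Vandermonde
determinant, and `δ_m(K)^(m(m-1)/2)` is the supremum of these determinants over `m`-tuples in `K`.
As `P` is monic of degree `n`, column operations turn the last column `(xᵢⁿ)` of the Vandermonde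
matrix into `(P(xᵢ))` without changing the determinant. Expanding along that column bounds it by
`∑ᵢ |P(xᵢ)| |V(x without xᵢ)| ≤ (n+1) ‖P‖_K δ_n(K)^(n(n-1)/2)`. -/

open Finset Matrix

theorem Finset.prod_offDiag_eq_sq {α M : Type*} [LinearOrder α] [CommMonoid M] (s : Finset α)
    {f : α → α → M} (hf : ∀ a b, f a b = f b a) :
    ∏ p ∈ s.offDiag, f p.1 p.2 = (∏ a ∈ s, ∏ b ∈ s with a < b, f a b) ^ 2 := by
  have hlt : ∏ p ∈ s.offDiag with p.1 < p.2, f p.1 p.2 = ∏ a ∈ s, ∏ b ∈ s with a < b, f a b :=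
    prod_finset_product' _ _ _ fun p => by simp +contextual [and_assoc, and_left_comm, ne_of_lt]
  have hgt : ∏ p ∈ s.offDiag with ¬p.1 < p.2, f p.1 p.2 =
      ∏ p ∈ s.offDiag with p.1 < p.2, f p.1 p.2 :=
    prod_nbij' Prod.swap Prod.swap (by simp +contextual [lt_of_le_of_ne', eq_comm])
      (by simp +contextual [le_of_lt, eq_comm]) (by simp) (by simp) (fun p _ => hf _ _)
  rw [← prod_filter_mul_prod_filter_not s.offDiag (fun p => p.1 < p.2), hgt, hlt, sq]

theorem prod_offDiag_abs_sub_eq_sq_abs_det_vandermonde {R : Type*} [CommRing R] [LinearOrder R]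
    [IsStrictOrderedRing R] {m : ℕ} (v : Fin m → R) :
    ∏ p ∈ univ.offDiag, |v p.1 - v p.2| = |(vandermonde v).det| ^ 2 := by
  rw [prod_offDiag_eq_sq _ fun a b => abs_sub_comm (v a) (v b), det_vandermonde, abs_prod]
  simp only [filter_lt_eq_Ioi, abs_prod, abs_sub_comm]

theorem Matrix.det_vandermonde_eq_sum {R : Type*} [CommRing R] [Nontrivial R] {n : ℕ} {P : R[X]}
    (hP : P.Monic) (hPdeg : P.natDegree = n) (v : Fin (n + 1) → R) :
    (vandermonde v).det = ∑ i : Fin (n + 1), (-1) ^ (i + n : ℕ) * P.eval (v i) *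
      (vandermonde (v ∘ i.succAbove)).det := by
  classical
  let p : Fin (n + 1) → R[X] := fun j => if j = Fin.last n then P else X ^ (j : ℕ)
  have hp_deg (j : Fin (n + 1)) : (p j).natDegree = j := by
    by_cases hj : j = Fin.last n <;> simp [p, hj, hPdeg, natDegree_X_pow]
  have hp_monic (j : Fin (n + 1)) : (p j).Monic := by
    by_cases hj : j = Fin.last n <;> simp [p, hj, hP, monic_X_pow]
  rw [det_eval_matrixOfPolynomials_eq_det_vandermonde v p hp_deg hp_monic,
    det_succ_column _ (Fin.last n)]
  refine sum_congr rfl fun i _ => ?_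
  congr 2
  · simp [p]
  · ext a b
    simp [p, vandermonde_apply, Fin.succAbove_last, (Fin.castSucc_lt_last b).ne]

theorem abs_det_vandermonde_le_sum {R : Type*} [CommRing R] [LinearOrder R]
    [IsStrictOrderedRing R] {n : ℕ} {P : R[X]} (hP : P.Monic) (hPdeg : P.natDegree = n)
    (v : Fin (n + 1) → R) :
    |(vandermonde v).det| ≤
      ∑ i : Fin (n + 1), |P.eval (v i)| * |(vandermonde (v ∘ i.succAbove)).det| := by
  rw [det_vandermonde_eq_sum hP hPdeg]
  exact (abs_sum_le_sum_abs _ _).trans_eq (by simp [abs_mul])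

section Diameter

variable {K : Set ℝ} {m : ℕ}

theorem supNormOn_nonneg (K : Set ℝ) (P : ℝ[X]) : 0 ≤ supNormOn K P :=
  Real.sSup_nonneg <| by rintro _ ⟨x, -, rfl⟩; exact abs_nonneg _

theorem abs_eval_le_supNormOn (hK : IsCompact K) (P : ℝ[X]) {x : ℝ} (hx : x ∈ K) :
    |P.eval x| ≤ supNormOn K P :=
  le_csSup (hK.image P.continuous.abs).bddAbove ⟨x, hx, rfl⟩

theorem deltaN_nonneg (K : Set ℝ) (m : ℕ) : 0 ≤ deltaN K m :=
  Real.sSup_nonneg <| by rintro _ ⟨x, -, rfl⟩; positivity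

theorem le_deltaN (hK : IsCompact K) {x : Fin m → ℝ} (hx : ∀ i, x i ∈ K) :
    (∏ p ∈ univ.offDiag, |x p.1 - x p.2|) ^ (((m : ℝ) * ((m : ℝ) - 1))⁻¹) ≤ deltaN K m := by
  have hexp : 0 ≤ ((m : ℝ) * ((m : ℝ) - 1))⁻¹ := by
    rcases m with _ | m
    · simp
    · push_cast
      rw [add_sub_cancel_right]
      positivity
  have hcont : Continuous fun y : Fin m → ℝ =>
      (∏ p ∈ univ.offDiag, |y p.1 - y p.2|) ^ (((m : ℝ) * ((m : ℝ) - 1))⁻¹) :=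
    (continuous_finsetProd _ fun p _ => by fun_prop).rpow_const fun _ => Or.inr hexp
  refine le_csSup (((isCompact_univ_pi fun _ => hK).image hcont).bddAbove.mono ?_) ⟨x, hx, rfl⟩
  rintro _ ⟨y, hy, rfl⟩
  exact ⟨y, fun i _ => hy i, rfl⟩

theorem prod_offDiag_abs_sub_rpow_pow_choose_two (hm : 2 ≤ m) (x : Fin m → ℝ) :
    ((∏ p ∈ univ.offDiag, |x p.1 - x p.2|) ^ (((m : ℝ) * ((m : ℝ) - 1))⁻¹)) ^ m.choose 2 =
      |(vandermonde x).det| := by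
  have hm_real : (2 : ℝ) ≤ m := by exact_mod_cast hm
  rw [prod_offDiag_abs_sub_eq_sq_abs_det_vandermonde, ← Real.rpow_natCast _ (m.choose 2),
    ← Real.rpow_natCast _ 2, ← Real.rpow_mul (by positivity), ← Real.rpow_mul (by positivity),
    Nat.cast_choose_two]
  convert Real.rpow_one _ using 2
  have : (m : ℝ) - 1 ≠ 0 := by linarith
  field_simp
  norm_num

theorem abs_det_vandermonde_le_deltaN_pow (hK : IsCompact K) (hm : 2 ≤ m) {x : Fin m → ℝ}
    (hx : ∀ i, x i ∈ K) : |(vandermonde x).det| ≤ deltaN K m ^ m.choose 2 := by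
  rw [← prod_offDiag_abs_sub_rpow_pow_choose_two hm]
  exact pow_le_pow_left₀ (by positivity) (le_deltaN hK hx) _

theorem deltaN_pow_choose_two_le (hm : 2 ≤ m) {B : ℝ} (hB : 0 ≤ B)
    (h : ∀ x : Fin m → ℝ, (∀ i, x i ∈ K) → |(vandermonde x).det| ≤ B) :
    deltaN K m ^ m.choose 2 ≤ B := by
  have hk : 0 < m.choose 2 := Nat.choose_pos hm
  suffices deltaN K m ≤ B ^ ((m.choose 2 : ℝ)⁻¹) by
    calc deltaN K m ^ m.choose 2 ≤ (B ^ ((m.choose 2 : ℝ)⁻¹)) ^ m.choose 2 :=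
          pow_le_pow_left₀ (deltaN_nonneg K m) this _
      _ = B := Real.rpow_inv_natCast_pow hB hk.ne'
  refine Real.sSup_le ?_ (by positivity)
  rintro _ ⟨x, hx, rfl⟩
  rw [Real.le_rpow_inv_iff_of_pos (by positivity) hB (by exact_mod_cast hk), Real.rpow_natCast,
    prod_offDiag_abs_sub_rpow_pow_choose_two hm]
  exact h x hx

end Diameter

theorem deltaN_succ_pow_le_general (K : Set ℝ) (hK : IsCompact K)
    (n : ℕ) (hn : 2 ≤ n) (P : Polynomial ℝ) (hP : P.Monic) (hPdeg : P.natDegree = n) :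
    deltaN K (n + 1) ^ (n * (n + 1) / 2) ≤
      (n + 1 : ℝ) * deltaN K n ^ (n * (n - 1) / 2) * supNormOn K P := by
  have hexp : n * (n + 1) / 2 = (n + 1).choose 2 := by
    rw [Nat.choose_two_right, Nat.add_sub_cancel, mul_comm]
  rw [hexp, ← Nat.choose_two_right]
  have hB : 0 ≤ (n + 1 : ℝ) * deltaN K n ^ n.choose 2 * supNormOn K P :=
    mul_nonneg (by have := deltaN_nonneg K n; positivity) (supNormOn_nonneg K P)
  refine deltaN_pow_choose_two_le (by omega) hB fun v hv => ?_
  calc |(vandermonde v).det|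
      ≤ ∑ i : Fin (n + 1), |P.eval (v i)| * |(vandermonde (v ∘ i.succAbove)).det| :=
        abs_det_vandermonde_le_sum hP hPdeg v
    _ ≤ ∑ _i : Fin (n + 1), supNormOn K P * deltaN K n ^ n.choose 2 := by
        gcongr with i
        · exact supNormOn_nonneg K P
        · exact abs_eval_le_supNormOn hK P (hv i)
        · exact abs_det_vandermonde_le_deltaN_pow hK hn fun j => hv _
    _ = (n + 1 : ℝ) * deltaN K n ^ n.choose 2 * supNormOn K P := by
        simp only [sum_const, card_univ, Fintype.card_fin, nsmul_eq_mul, Nat.cast_add, Nat.cast_one]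
        ring

/-- For every monic real polynomial `P` of degree `n ≥ 2`,
`δ_{n+1}(K)^(n(n+1)/2) ≤ (n+1) * δ_n(K)^(n(n-1)/2) * ‖P‖_K`. -/
theorem deltaN_succ_pow_le (K : Set ℝ) (hK : IsCompact K) (hKinf : K.Infinite)
    (n : ℕ) (hn : 2 ≤ n) (P : Polynomial ℝ) (hP : P.Monic) (hPdeg : P.natDegree = n) :
    deltaN K (n + 1) ^ (n * (n + 1) / 2) ≤
      (n + 1 : ℝ) * deltaN K n ^ (n * (n - 1) / 2) * supNormOn K P :=
  deltaN_succ_pow_le_general K hK n hn P hP hPdeg
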